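/- LP with logical constants is functionally incomplete: there exists a unary function f : {⊤,+,⊥} → {⊤,+,⊥} that is not expressible by any LP propositional formula in one variable built from the variable, the constants ⊤, +, ⊥, negation, and conjunction (with disjunction defined by De Morgan). -/
import Mathlib


inductive TV where
  | top | par | bot
deriving DecidableEq

open TV

def tvNeg : TV → TV
  | top => bot
  | par => par
  | bot => top

def tvAnd : TV → TV → TV
  | top, b   => b
  | par, top => par
  | par, par => par
  | par, bot => bot
  | bot, _   => bot

def tvOr (a b : TV) : TV := tvNeg (tvAnd (tvNeg a) (tvNeg b))

/-- LP propositional formulas in one variable, with logical constants. -/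
inductive Fm1 where
  | var : Fm1
  | const : TV → Fm1
  | neg : Fm1 → Fm1
  | and : Fm1 → Fm1 → Fm1
  | or : Fm1 → Fm1 → Fm1

/-- Evaluation of a one-variable LP formula at a truth value. -/
def eval1 : Fm1 → TV → TV
  | .var, a => a
  | .const c, _ => c
  | .neg φ, a => tvNeg (eval1 φ a)
  | .and φ ψ, a => tvAnd (eval1 φ a) (eval1 ψ a)
  | .or φ ψ, a => tvOr (eval1 φ a) (eval1 ψ a)

/-- Information order: `par` is below everything. -/
abbrev tvSub (a b : TV) : Prop := a = par ∨ a = b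

instance : Fintype TV :=
  ⟨{top, par, bot}, by intro x; cases x <;> simp⟩

lemma tvSub_neg : ∀ a b, tvSub a b → tvSub (tvNeg a) (tvNeg b) := by decide
lemma tvSub_and : ∀ a a' b b', tvSub a a' → tvSub b b' → tvSub (tvAnd a b) (tvAnd a' b') := by decide

lemma key (φ : Fm1) : tvSub (eval1 φ par) (eval1 φ top) := by
  induction φ with
  | var => exact Or.inl rfl
  | const c => exact Or.inr rfl
  | neg φ ih => exact tvSub_neg _ _ ih
  | and φ ψ ih1 ih2 => exact tvSub_and _ _ _ _ ih1 ih2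
  | or φ ψ ih1 ih2 =>
      exact tvSub_neg _ _ (tvSub_and _ _ _ _ (tvSub_neg _ _ ih1) (tvSub_neg _ _ ih2))

/-- LP with logical constants is functionally incomplete: some unary
truth function is not the evaluation function of any one-variable LP formula. -/
theorem LP_functionally_incomplete :
    ∃ f : TV → TV, ∀ φ : Fm1, (fun a => eval1 φ a) ≠ f := by
  refine ⟨fun a => match a with | par => top | _ => bot, fun φ h => ?_⟩
  have h1 : eval1 φ par = top := congrFun h par
  have h2 : eval1 φ top = bot := congrFun h top
  have := key φ
  rw [h1, h2] at this
  rcases this with h | h <;> exact TV.noConfusion h
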